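/- For every real number M > 0, the quotient r(τ,x)² / (16M²·(τ + x²/2)) tends to 1 as (τ,x) → (0,0) along points with τ ≥ 0 and (τ,x) ≠ (0,0); that is, near the singular sphere the Schwarzschild radius satisfies the leading asymptotics r² ∼ 16M²(τ + x²/2). -/

import Mathlib

/-!
Put `s = (1 - τ)² - x²`, so that `f_M(r) = s`. As `(τ, x) → (0, 0)` we have `s → 1⁻`, and since
`f_M` decreases on `[0, ∞)` from `f_M(0) = 1`, `r → 0⁺`. By l'Hôpital `1 - (1 - u)eᵘ ∼ u²/2`,
i.e. `1 - f_M(ρ) ∼ ρ²/(8M²)`, hence `r² ∼ 8M²(1 - s)`. Finally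
`1 - s = 2τ + x² - τ²` lies between `(1 - τ/2)(2τ + x²)` and `2τ + x²` for `τ ≥ 0`.
-/

open Filter Topology

/-- The Kruskal relation function `f_M(ρ) = (1 - ρ/(2M))·exp(ρ/(2M))`. -/
noncomputable def fM (M ρ : ℝ) : ℝ := (1 - ρ / (2 * M)) * Real.exp (ρ / (2 * M))

open Set

lemma hasDerivAt_one_sub_mul_exp (u : ℝ) :
    HasDerivAt (fun u : ℝ => (1 - u) * Real.exp u) (-(u * Real.exp u)) u :=
  (((hasDerivAt_id' u).const_sub 1).mul (Real.hasDerivAt_exp u)).congr_deriv (by ring)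

lemma strictAntiOn_one_sub_mul_exp :
    StrictAntiOn (fun u : ℝ => (1 - u) * Real.exp u) (Ici 0) := by
  refine strictAntiOn_of_deriv_neg (convex_Ici 0)
    (fun u _ => (hasDerivAt_one_sub_mul_exp u).continuousAt.continuousWithinAt) fun u hu => ?_
  rw [interior_Ici, mem_Ioi] at hu
  rw [(hasDerivAt_one_sub_mul_exp u).deriv, neg_lt_zero]
  positivity

lemma tendsto_one_sub_one_sub_mul_exp_div_sq :
    Tendsto (fun u : ℝ => (1 - (1 - u) * Real.exp u) / u ^ 2) (𝓝[≠] 0) (𝓝 (1 / 2)) := by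
  have hderiv : Tendsto (fun u : ℝ => u * Real.exp u / (2 * u)) (𝓝[≠] 0) (𝓝 (1 / 2)) := by
    have : Tendsto (fun u : ℝ => Real.exp u / 2) (𝓝[≠] 0) (𝓝 (1 / 2)) := by
      simpa using ((Real.continuous_exp.div_const 2).tendsto 0).mono_left nhdsWithin_le_nhds
    refine this.congr' ?_
    filter_upwards [self_mem_nhdsWithin] with u (hu : u ≠ 0)
    field_simp
  refine HasDerivAt.lhopital_zero_nhdsNE (f' := fun u => u * Real.exp u) (g' := fun u => 2 * u)
    (Eventually.of_forall fun u => by simpa using (hasDerivAt_one_sub_mul_exp u).const_sub 1)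
    (Eventually.of_forall fun u => by simpa using hasDerivAt_pow 2 u)
    ?_ ?_ ?_ hderiv
  · filter_upwards [self_mem_nhdsWithin] with u (hu : u ≠ 0) using mul_ne_zero two_ne_zero hu
  · refine tendsto_nhdsWithin_of_tendsto_nhds ?_
    simpa using (show Continuous fun u : ℝ => 1 - (1 - u) * Real.exp u by fun_prop).tendsto 0
  · refine tendsto_nhdsWithin_of_tendsto_nhds ?_
    simpa using (continuous_pow 2).tendsto (0 : ℝ)

lemma fM_zero (M : ℝ) : fM M 0 = 1 := by simp [fM]

lemma fM_strictAntiOn {M : ℝ} (hM : 0 < M) : StrictAntiOn (fM M) (Ici 0) :=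
  fun _ ha _ hb hab => strictAntiOn_one_sub_mul_exp
    (div_nonneg ha (by positivity : (0 : ℝ) ≤ 2 * M))
    (div_nonneg hb (by positivity : (0 : ℝ) ≤ 2 * M))
    (div_lt_div_of_pos_right hab (by positivity))

lemma tendsto_sq_div_one_sub_fM {M : ℝ} (hM : M ≠ 0) :
    Tendsto (fun ρ => ρ ^ 2 / (8 * M ^ 2 * (1 - fM M ρ))) (𝓝[≠] 0) (𝓝 1) := by
  have hscale : Tendsto (fun ρ : ℝ => ρ / (2 * M)) (𝓝[≠] 0) (𝓝[≠] 0) := by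
    refine tendsto_nhdsWithin_iff.2 ⟨?_, ?_⟩
    · refine tendsto_nhdsWithin_of_tendsto_nhds ?_
      simpa using (continuous_id.div_const (2 * M)).tendsto (0 : ℝ)
    · filter_upwards [self_mem_nhdsWithin] with ρ (hρ : ρ ≠ 0)
      exact div_ne_zero hρ (by positivity)
  have h := ((tendsto_one_sub_one_sub_mul_exp_div_sq.inv₀ (by norm_num)).comp hscale).div_const 2
  rw [show ((1 : ℝ) / 2)⁻¹ / 2 = 1 by norm_num] at h
  refine h.congr' (Eventually.of_forall fun ρ => ?_)
  simp only [Function.comp_apply, fM, inv_div, div_pow, div_div]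
  ring

lemma tendsto_nhdsGT_zero_of_strictAntiOn {f r : ℝ → ℝ} {b : ℝ}
    (hf : StrictAntiOn f (Ici 0)) (hf0 : f 0 = b) (hr : ∀ s < b, 0 < r s ∧ f (r s) = s) :
    Tendsto r (𝓝[<] b) (𝓝[>] 0) := by
  refine tendsto_nhdsWithin_iff.2
    ⟨tendsto_order.2 ⟨fun a ha => ?_, fun a ha => ?_⟩,
      eventually_nhdsWithin_of_forall fun s hs => (hr s hs).1⟩
  · exact eventually_nhdsWithin_of_forall fun s hs => ha.trans (hr s hs).1
  · have hfa : f a < b := hf0 ▸ hf self_mem_Ici ha.le ha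
    filter_upwards [Ioo_mem_nhdsLT hfa] with s hs
    by_contra! has
    have := hf.antitoneOn ha.le (hr s hs.2).1.le has
    rw [(hr s hs.2).2] at this
    exact this.not_gt hs.1

lemma two_mul_add_sq_pos {p : ℝ × ℝ} (hp : 0 ≤ p.1 ∧ p ≠ (0, 0)) :
    0 < 2 * p.1 + p.2 ^ 2 := by
  obtain ⟨hτ, hne⟩ := hp
  rcases hτ.lt_or_eq with hτ | hτ
  · positivity
  · have hx : p.2 ≠ 0 := fun hx => hne (Prod.ext hτ.symm hx)
    rw [← hτ]
    positivity

lemma one_sub_half_mul_le_one_sub_sq_sub_sq {τ x : ℝ} (hτ : 0 ≤ τ) :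
    (1 - τ / 2) * (2 * τ + x ^ 2) ≤ 1 - ((1 - τ) ^ 2 - x ^ 2) := by
  nlinarith [mul_nonneg hτ (sq_nonneg x)]

lemma tendsto_sq_sub_sq_nhdsLT_one :
    Tendsto (fun p : ℝ × ℝ => (1 - p.1) ^ 2 - p.2 ^ 2)
      (𝓝[{p : ℝ × ℝ | 0 ≤ p.1 ∧ p ≠ (0, 0)}] (0, 0)) (𝓝[<] 1) := by
  refine tendsto_nhdsWithin_iff.2 ⟨tendsto_nhdsWithin_of_tendsto_nhds ?_, ?_⟩
  · simpa using (show Continuous fun p : ℝ × ℝ => (1 - p.1) ^ 2 - p.2 ^ 2 by fun_prop).tendsto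
      ((0 : ℝ), (0 : ℝ))
  · filter_upwards [self_mem_nhdsWithin, (continuous_fst.continuousWithinAt
      (x := ((0 : ℝ), (0 : ℝ)))).eventually (gt_mem_nhds two_pos)] with p hp hτ
    show (1 - p.1) ^ 2 - p.2 ^ 2 < 1
    nlinarith [mul_pos (by linarith : 0 < 1 - p.1 / 2) (two_mul_add_sq_pos hp),
      one_sub_half_mul_le_one_sub_sq_sub_sq (x := p.2) hp.1]

lemma tendsto_one_sub_sq_sub_sq_div :
    Tendsto (fun p : ℝ × ℝ => (1 - ((1 - p.1) ^ 2 - p.2 ^ 2)) / (2 * p.1 + p.2 ^ 2))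
      (𝓝[{p : ℝ × ℝ | 0 ≤ p.1 ∧ p ≠ (0, 0)}] (0, 0)) (𝓝 1) := by
  refine tendsto_of_tendsto_of_tendsto_of_le_of_le' (g := fun p => 1 - p.1 / 2)
    (by simpa using ((continuous_fst.continuousWithinAt (x := ((0 : ℝ), (0 : ℝ)))).div_const 2)
      |>.tendsto.const_sub 1)
    tendsto_const_nhds ?_ ?_
  all_goals filter_upwards [self_mem_nhdsWithin] with p hp
  · rw [le_div_iff₀ (two_mul_add_sq_pos hp)]
    exact one_sub_half_mul_le_one_sub_sq_sub_sq hp.1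
  · rw [div_le_one (two_mul_add_sq_pos hp)]
    nlinarith [sq_nonneg p.1]

/-- For every `M > 0`, the quotient `r(τ,x)² / (16M²·(τ + x²/2))` tends to `1` as
`(τ,x) → (0,0)` along points with `τ ≥ 0` and `(τ,x) ≠ (0,0)`, where
`r(τ,x) = r_M((1-τ)² - x²)` and `r_M` is the Schwarzschild radius function
(characterized by `r_M(s) > 0` and `f_M(r_M(s)) = s` for all `s < 1`);
that is, near the singular sphere `r² ∼ 16M²(τ + x²/2)`. -/
theorem radius_leading_asymptotics (M : ℝ) (hM : 0 < M) (rM : ℝ → ℝ)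
    (hrM : ∀ s : ℝ, s < 1 → 0 < rM s ∧ fM M (rM s) = s) :
    Tendsto
      (fun p : ℝ × ℝ =>
        (rM ((1 - p.1) ^ 2 - p.2 ^ 2)) ^ 2 / (16 * M ^ 2 * (p.1 + p.2 ^ 2 / 2)))
      (𝓝[{p : ℝ × ℝ | 0 ≤ p.1 ∧ p ≠ (0, 0)}] (0, 0)) (𝓝 1) := by
  have hs := tendsto_sq_sub_sq_nhdsLT_one
  have hr : Tendsto (fun p : ℝ × ℝ => rM ((1 - p.1) ^ 2 - p.2 ^ 2))
      (𝓝[{p : ℝ × ℝ | 0 ≤ p.1 ∧ p ≠ (0, 0)}] (0, 0)) (𝓝[>] 0) :=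
    (tendsto_nhdsGT_zero_of_strictAntiOn (fM_strictAntiOn hM) (fM_zero M) hrM).comp hs
  have hA := (tendsto_sq_div_one_sub_fM hM.ne').comp (hr.mono_right (nhdsGT_le_nhdsNE 0))
  have hprod := hA.mul tendsto_one_sub_sq_sub_sq_div
  rw [mul_one] at hprod
  -- after substituting `f_M(r) = s`, the factors `1 - s` of the two quotients cancel
  refine hprod.congr' ?_
  filter_upwards [self_mem_nhdsWithin, hs self_mem_nhdsWithin]
    with p hp (hs1 : (1 - p.1) ^ 2 - p.2 ^ 2 < 1)
  have hd := two_mul_add_sq_pos hp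
  have h1s : 0 < 1 - ((1 - p.1) ^ 2 - p.2 ^ 2) := by linarith
  simp only [Function.comp, (hrM _ hs1).2]
  field_simp
  ring
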